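/- arXiv:1601.00728 — 3 statements merged into one kernel-verified Lean document; each statement's English description precedes it below -/
import Mathlib

section
/- If q : ℝ → ℝ satisfies x q''(x) - 2x sin(2q(x)) + q'(x) + 2 sin(q(x)) = 0 on an interval, and y(t) = ((e^{i q(t/4)} + 1)/(e^{i q(t/4)} - 1))^2 with e^{i q(t/4)} ≠ 1, then y satisfies the special Painlevé V equation y'' = (1/(2y) + 1/(y-1))(y')^2 - y'/t + y/t - y(y+1)/(2(y-1)). -/
/-!
Put `θ t = q (t / 4)` and `e = exp (i θ)`. Then `y = ((e + 1) / (e - 1)) ^ 2` is a rational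
function of `e`, so by the chain rule `y'` and `y''` are rational in `e` with coefficients
`i θ'` and `i θ''`. Since `i sin θ · e = (e² - 1) / 2`, the equation for `q` becomes a polynomial
relation between `e`, `i θ'`, `i θ''` and `t`, and clearing denominators turns Painlevé V into
a multiple of that relation.
-/

open Complex Set Topology

theorem hasDerivAt_sq_add_one_div_sub_one {z : ℂ} (hz : z ≠ 1) :
    HasDerivAt (fun w : ℂ => ((w + 1) / (w - 1)) ^ 2) (-4 * (z + 1) / (z - 1) ^ 3) z := by
  have hz' : z - 1 ≠ 0 := sub_ne_zero.mpr hz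
  refine ((((hasDerivAt_id' z).add_const 1).div ((hasDerivAt_id' z).sub_const 1) hz').pow 2)
    |>.congr_deriv ?_
  simp only [Pi.div_apply, Nat.cast_ofNat, Nat.reduceSub, pow_one]
  field_simp
  ring

theorem hasDerivAt_mul_add_one_div_sub_one_pow_three {z : ℂ} (hz : z ≠ 1) :
    HasDerivAt (fun w : ℂ => -4 * w * (w + 1) / (w - 1) ^ 3)
      (4 * (z ^ 2 + 4 * z + 1) / (z - 1) ^ 4) z := by
  have hz' : z - 1 ≠ 0 := sub_ne_zero.mpr hz
  refine ((((hasDerivAt_id' z).const_mul (-4)).mul ((hasDerivAt_id' z).add_const 1)).div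
    (((hasDerivAt_id' z).sub_const 1).pow 3) (pow_ne_zero 3 hz')) |>.congr_deriv ?_
  simp only [Pi.pow_apply, Pi.mul_apply]
  field_simp
  ring

theorem HasDerivAt.comp_cexp {f : ℂ → ℂ} {f' : ℂ} {φ : ℝ → ℂ} {φ' : ℂ} {s : ℝ}
    (hf : HasDerivAt f f' (cexp (φ s))) (hφ : HasDerivAt φ φ' s) :
    HasDerivAt (fun s => f (cexp (φ s))) (φ' * (cexp (φ s) * f')) s :=
  (hf.comp s hφ.cexp).congr_deriv (by ring)

theorem hasDerivAt_const_mul_ofReal_comp_div {g : ℝ → ℝ} {s k : ℝ} (c : ℂ)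
    (hg : DifferentiableAt ℝ g (s / k)) :
    HasDerivAt (fun s : ℝ => c * (g (s / k) : ℂ)) (c / k * deriv g (s / k)) s := by
  have := (hg.hasDerivAt.comp s ((hasDerivAt_id s).div_const k)).ofReal_comp.const_mul c
  refine this.congr_deriv ?_
  push_cast
  ring

theorem I_mul_sin_mul_cexp (z : ℂ) : I * sin z * cexp (I * z) = (cexp (I * z) ^ 2 - 1) / 2 := by
  have h : cexp (-z * I) * cexp (I * z) = 1 := by rw [← exp_add]; ring_nf; exact exp_zero
  rw [sin, mul_comm z I]
  linear_combination ((cexp (-z * I) - cexp (I * z)) * cexp (I * z) / 2) * I_mul_I - h / 2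

theorem cexp_relation_of_sin_ode {x θ θ₁ θ₂ : ℝ}
    (h : x * θ₂ - 2 * x * Real.sin (2 * θ) + θ₁ + 2 * Real.sin θ = 0) :
    x * (I * θ₂) * cexp (I * θ) ^ 2
      = x * (cexp (I * θ) ^ 4 - 1)
        - (I * θ₁ * cexp (I * θ) ^ 2 + cexp (I * θ) ^ 3 - cexp (I * θ)) := by
  have h₁ := I_mul_sin_mul_cexp θ
  have h₂ := I_mul_sin_mul_cexp (2 * θ)
  rw [show I * (2 * (θ : ℂ)) = I * θ + I * θ by ring, exp_add] at h₂
  have hc : (x : ℂ) * θ₂ - 2 * x * sin (2 * θ) + θ₁ + 2 * sin θ = 0 := by exact_mod_cast h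
  linear_combination I * cexp (I * θ) ^ 2 * hc + 2 * x * h₂ - 2 * cexp (I * θ) * h₁

theorem painleveV_of_cexp_relation (e u v T y y₁ y₂ : ℂ) (he : e ≠ 0) (he₁ : e - 1 ≠ 0)
    (he₁' : e + 1 ≠ 0) (hT : T ≠ 0)
    (hode : 16 * v * T * e ^ 2 = (e ^ 4 - 1) * T - 4 * (4 * u * e ^ 2 + e ^ 3 - e))
    (hy : y = ((e + 1) / (e - 1)) ^ 2)
    (hy₁ : y₁ = u * (-4 * e * (e + 1) / (e - 1) ^ 3))
    (hy₂ : y₂ = v * (-4 * e * (e + 1) / (e - 1) ^ 3)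
      + u * (u * (e * (4 * (e ^ 2 + 4 * e + 1) / (e - 1) ^ 4)))) :
    y₂ = (1 / (2 * y) + 1 / (y - 1)) * y₁ ^ 2 - y₁ / T + y / T - y * (y + 1) / (2 * (y - 1)) := by
  have hy1 : y - 1 = 4 * e / (e - 1) ^ 2 := by rw [hy]; field_simp; ring
  rw [hy1]
  subst hy hy₁ hy₂
  field_simp
  linear_combination (2 - 2 * e ^ 2) * hode

theorem stmt_0_general (a b : ℝ) (q : ℝ → ℝ)
    (hq : ∀ x ∈ Ioo a b, DifferentiableAt ℝ q x)
    (hq' : ∀ x ∈ Ioo a b, DifferentiableAt ℝ (deriv q) x)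
    (heq : ∀ x ∈ Ioo a b,
      x * deriv (deriv q) x - 2 * x * Real.sin (2 * q x) + deriv q x + 2 * Real.sin (q x) = 0)
    (y : ℝ → ℂ)
    (hy : ∀ t : ℝ, y t =
      ((Complex.exp (Complex.I * (q (t / 4) : ℂ)) + 1) /
       (Complex.exp (Complex.I * (q (t / 4) : ℂ)) - 1)) ^ 2)
    (t : ℝ) (ht : t / 4 ∈ Ioo a b) (ht0 : t ≠ 0)
    (hne : Complex.exp (Complex.I * (q (t / 4) : ℂ)) ≠ 1)
    (hy0 : y t ≠ 0) :
    deriv (deriv y) t =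
      (1 / (2 * y t) + 1 / (y t - 1)) * (deriv y t) ^ 2
        - deriv y t / (t : ℂ) + y t / (t : ℂ)
        - y t * (y t + 1) / (2 * (y t - 1)) := by
  set φ : ℝ → ℂ := fun s => I * q (s / 4)
  set φ' : ℝ → ℂ := fun s => I / 4 * deriv q (s / 4)
  -- `G w = w F'(w)` for `F w = ((w + 1) / (w - 1)) ^ 2`, so that `y' = φ' · G (exp φ)`
  set G : ℂ → ℂ := fun w => -4 * w * (w + 1) / (w - 1) ^ 3
  have hφ : ∀ s, s / 4 ∈ Ioo a b → HasDerivAt φ (φ' s) s := fun s hs =>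
    hasDerivAt_const_mul_ofReal_comp_div I (hq _ hs)
  have hφ' : HasDerivAt φ' (I / 4 / 4 * deriv (deriv q) (t / 4)) t :=
    hasDerivAt_const_mul_ofReal_comp_div (I / 4) (hq' _ ht)
  have hy_fun : y = fun s => ((cexp (φ s) + 1) / (cexp (φ s) - 1)) ^ 2 := funext hy
  have hdy : ∀ s, s / 4 ∈ Ioo a b → cexp (φ s) ≠ 1 → HasDerivAt y (φ' s * G (cexp (φ s))) s :=
    fun s hs hs1 => hy_fun ▸
      ((hasDerivAt_sq_add_one_div_sub_one hs1).comp_cexp (hφ s hs)).congr_deriv (by ring)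
  have hne' : cexp (φ t) ≠ 1 := hne
  have hnear_t : ∀ᶠ s in 𝓝 t, s / 4 ∈ Ioo a b :=
    (continuous_id.div_const 4).continuousAt.preimage_mem_nhds (isOpen_Ioo.mem_nhds ht)
  have hnear : ∀ᶠ s in 𝓝 t, s / 4 ∈ Ioo a b ∧ cexp (φ s) ≠ 1 :=
    hnear_t.and ((hφ t ht).cexp.continuousAt.eventually_ne hne')
  have hddy := (hφ'.mul ((hasDerivAt_mul_add_one_div_sub_one_pow_three hne').comp_cexp
    (hφ t ht))).congr_of_eventuallyEq
      (hnear.mono fun s hs => (hdy s hs.1 hs.2).deriv)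
  have hode := cexp_relation_of_sin_ode (heq _ ht)
  push_cast at hode
  rw [hddy.deriv, (hdy t ht hne').deriv, hy t]
  refine painleveV_of_cexp_relation (cexp (φ t)) (φ' t) _ t _ _ _ (exp_ne_zero _)
    (sub_ne_zero.mpr hne') (fun h => hy0 (by rw [hy t, h]; simp)) (ofReal_ne_zero.mpr ht0) ?_
    rfl rfl rfl
  linear_combination 4 * hode

/-- If `q : ℝ → ℝ` satisfies `x q'' - 2x sin(2q) + q' + 2 sin q = 0` on an interval, and
`y t = ((e^{i q(t/4)} + 1)/(e^{i q(t/4)} - 1))^2` with `e^{i q(t/4)} ≠ 1`, then `y` satisfies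
the special Painlevé V equation. -/
theorem stmt_0 (a b : ℝ) (q : ℝ → ℝ)
    (hq : ∀ x ∈ Ioo a b, DifferentiableAt ℝ q x)
    (hq' : ∀ x ∈ Ioo a b, DifferentiableAt ℝ (deriv q) x)
    (heq : ∀ x ∈ Ioo a b,
      x * deriv (deriv q) x - 2 * x * Real.sin (2 * q x) + deriv q x + 2 * Real.sin (q x) = 0)
    (y : ℝ → ℂ)
    (hy : ∀ t : ℝ, y t =
      ((Complex.exp (Complex.I * (q (t / 4) : ℂ)) + 1) /
       (Complex.exp (Complex.I * (q (t / 4) : ℂ)) - 1)) ^ 2)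
    (t : ℝ) (ht : t / 4 ∈ Ioo a b) (ht0 : t ≠ 0)
    (hne : Complex.exp (Complex.I * (q (t / 4) : ℂ)) ≠ 1)
    (hy0 : y t ≠ 0) (hy1 : y t ≠ 1) :
    deriv (deriv y) t =
      (1 / (2 * y t) + 1 / (y t - 1)) * (deriv y t) ^ 2
        - deriv y t / (t : ℂ) + y t / (t : ℂ)
        - y t * (y t + 1) / (2 * (y t - 1)) :=
  stmt_0_general a b q hq hq' heq y hy t ht ht0 hne hy0
end

section
/- Suppose y, v : ℝ → ℂ are differentiable on an open interval with t ≠ 0, y ≠ 0, y ≠ 1, and satisfy the system t y' = t y - 2v(y-1)^2 and t v' = y v^2 - v^2/y. Then y satisfies the special Painlevé V equation y'' = (1/(2y) + 1/(y-1))(y')^2 - y'/t + y/t - y(y+1)/(2(y-1)). -/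
/-!
On the interval the first equation expresses `y'` as `(t y - 2 v (y - 1)²) / t`, so `y''` is the
derivative of that quotient. After substituting `y'` from the first equation and `v'` from the
second, both sides of the Painlevé V equation are the same rational function of `t`, `y`, `v`.
-/

open Set Filter Topology

theorem deriv_eventuallyEq_div_of_mul_deriv_eq {U : Set ℝ} (hU : IsOpen U) {f F : ℝ → ℂ}
    (h : ∀ s ∈ U, (s : ℂ) * deriv f s = F s) (h0 : ∀ s ∈ U, s ≠ 0) {t : ℝ} (ht : t ∈ U) :
    deriv f =ᶠ[𝓝 t] fun s => F s / s := by
  filter_upwards [hU.mem_nhds ht] with s hs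
  rw [← h s hs, mul_div_cancel_left₀ _ (Complex.ofReal_ne_zero.mpr (h0 s hs))]

theorem hasDerivAt_isomonodromy_rhs {y v : ℝ → ℂ} {y' v' : ℂ} {t : ℝ} (hy : HasDerivAt y y' t)
    (hv : HasDerivAt v v' t) (ht : t ≠ 0) :
    HasDerivAt (fun s : ℝ => ((s : ℂ) * y s - 2 * v s * (y s - 1) ^ 2) / s)
      (((y t + t * y' - 2 * (v' * (y t - 1) ^ 2 + v t * (2 * (y t - 1) * y'))) * t
        - (t * y t - 2 * v t * (y t - 1) ^ 2)) / (t : ℂ) ^ 2) t := by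
  have hs : HasDerivAt (fun s : ℝ => (s : ℂ)) 1 t := (hasDerivAt_id t).ofReal_comp
  have hsq : HasDerivAt (fun s => (y s - 1) ^ 2) (2 * (y t - 1) * y') t := by
    simpa using (hy.sub_const 1).fun_pow 2
  exact (((hs.fun_mul hy).fun_sub ((hv.const_mul 2).fun_mul hsq)).fun_div hs
    (Complex.ofReal_ne_zero.mpr ht)).congr_deriv (by ring)

theorem painleveV_of_isomonodromy_values {t y v y' v' : ℂ} (ht : t ≠ 0) (hy0 : y ≠ 0)
    (hy1 : y ≠ 1) (h1 : t * y' = t * y - 2 * v * (y - 1) ^ 2) (h2 : t * v' = y * v ^ 2 - v ^ 2 / y) :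
    ((y + t * y' - 2 * (v' * (y - 1) ^ 2 + v * (2 * (y - 1) * y'))) * t
        - (t * y - 2 * v * (y - 1) ^ 2)) / t ^ 2 =
      (1 / (2 * y) + 1 / (y - 1)) * y' ^ 2 - y' / t + y / t - y * (y + 1) / (2 * (y - 1)) := by
  have hy1' : y - 1 ≠ 0 := sub_ne_zero.mpr hy1
  have hY : y' = (t * y - 2 * v * (y - 1) ^ 2) / t := (eq_div_iff ht).mpr (by linear_combination h1)
  have hV : v' = v ^ 2 * (y ^ 2 - 1) / (t * y) :=
    (eq_div_iff (mul_ne_zero ht hy0)).mpr (by field_simp at h2; linear_combination h2)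
  subst hY hV
  field_simp
  ring

/-- If `y, v` satisfy the first two equations of the PV isomonodromy system on an interval,
then `y` satisfies the special Painlevé V equation. -/
theorem stmt_1 (a b : ℝ) (y v : ℝ → ℂ)
    (hy : ∀ t ∈ Ioo a b, DifferentiableAt ℝ y t)
    (hv : ∀ t ∈ Ioo a b, DifferentiableAt ℝ v t)
    (ht0 : ∀ t ∈ Ioo a b, t ≠ 0)
    (hy0 : ∀ t ∈ Ioo a b, y t ≠ 0)
    (hy1 : ∀ t ∈ Ioo a b, y t ≠ 1)
    (heq1 : ∀ t ∈ Ioo a b, (t : ℂ) * deriv y t = (t : ℂ) * y t - 2 * v t * (y t - 1) ^ 2)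
    (heq2 : ∀ t ∈ Ioo a b, (t : ℂ) * deriv v t = y t * (v t) ^ 2 - (v t) ^ 2 / y t)
    (t : ℝ) (ht : t ∈ Ioo a b) :
    deriv (deriv y) t =
      (1 / (2 * y t) + 1 / (y t - 1)) * (deriv y t) ^ 2
        - deriv y t / (t : ℂ) + y t / (t : ℂ)
        - y t * (y t + 1) / (2 * (y t - 1)) := by
  rw [(deriv_eventuallyEq_div_of_mul_deriv_eq isOpen_Ioo heq1 ht0 ht).deriv_eq,
    (hasDerivAt_isomonodromy_rhs (hy t ht).hasDerivAt (hv t ht).hasDerivAt (ht0 t ht)).deriv]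
  exact painleveV_of_isomonodromy_values (Complex.ofReal_ne_zero.mpr (ht0 t ht)) (hy0 t ht)
    (hy1 t ht) (heq1 t ht) (heq2 t ht)
end

section
/- Suppose y, v : ℝ → ℂ satisfy the system t y' = t y - 2v(y-1)^2 and t v' = y v^2 - v^2/y on an interval where t ≠ 0, y ≠ 0. Then the quantity α² := 4(v²(1-y)²/y - v t) satisfies d/dt (α²) = -4v, i.e. d/dt (v²(1-y)²/y - vt) = -v. -/
open Set

theorem hasDerivAt_sq_mul_one_sub_sq_div_sub_mul_ofReal {y v : ℝ → ℂ} {y' v' : ℂ} {t : ℝ}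
    (hy : HasDerivAt y y' t) (hv : HasDerivAt v v' t) (hy0 : y t ≠ 0) :
    HasDerivAt (fun τ : ℝ => v τ ^ 2 * (1 - y τ) ^ 2 / y τ - v τ * (τ : ℂ))
      (v t * (1 - y t) * (2 * v' * (1 - y t) * y t - v t * y' * (1 + y t)) / y t ^ 2
        - v' * t - v t) t := by
  have hofReal : HasDerivAt (fun τ : ℝ => (τ : ℂ)) 1 t := (hasDerivAt_id t).ofReal_comp
  have h := (((hv.pow 2).mul ((hy.const_sub 1).pow 2)).div hy hy0).sub (hv.mul hofReal)
  refine h.congr_deriv ?_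
  simp only [Pi.mul_apply, Pi.pow_apply]
  field_simp
  ring

theorem eq_neg_of_painleveV_system {K : Type*} [Field K] {y v y' v' t : K} (ht : t ≠ 0) (hy : y ≠ 0)
    (hy' : t * y' = t * y - 2 * v * (y - 1) ^ 2)
    (hv' : t * v' = y * v ^ 2 - v ^ 2 / y) :
    v * (1 - y) * (2 * v' * (1 - y) * y - v * y' * (1 + y)) / y ^ 2 - v' * t - v = -v := by
  have hY : y' = (t * y - 2 * v * (y - 1) ^ 2) / t := by
    rw [eq_div_iff ht]; linear_combination hy'
  have hV : v' = (y * v ^ 2 - v ^ 2 / y) / t := by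
    rw [eq_div_iff ht]; linear_combination hv'
  rw [hY, hV]
  field_simp
  ring

/-- Along solutions of the PV isomonodromy system, the quantity
`v²(1-y)²/y - v t` (which equals `α(t)²/4`) satisfies `d/dt (v²(1-y)²/y - vt) = -v`. -/
theorem stmt_2 (a b : ℝ) (y v : ℝ → ℂ)
    (hy : ∀ t ∈ Ioo a b, DifferentiableAt ℝ y t)
    (hv : ∀ t ∈ Ioo a b, DifferentiableAt ℝ v t)
    (ht0 : ∀ t ∈ Ioo a b, t ≠ 0)
    (hy0 : ∀ t ∈ Ioo a b, y t ≠ 0)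
    (heq1 : ∀ t ∈ Ioo a b, (t : ℂ) * deriv y t = (t : ℂ) * y t - 2 * v t * (y t - 1) ^ 2)
    (heq2 : ∀ t ∈ Ioo a b, (t : ℂ) * deriv v t = y t * (v t) ^ 2 - (v t) ^ 2 / y t)
    (t : ℝ) (ht : t ∈ Ioo a b) :
    deriv (fun τ : ℝ => (v τ) ^ 2 * (1 - y τ) ^ 2 / y τ - v τ * (τ : ℂ)) t = - v t := by
  rw [(hasDerivAt_sq_mul_one_sub_sq_div_sub_mul_ofReal (hy t ht).hasDerivAt
    (hv t ht).hasDerivAt (hy0 t ht)).deriv]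
  exact eq_neg_of_painleveV_system (Complex.ofReal_ne_zero.mpr (ht0 t ht)) (hy0 t ht)
    (heq1 t ht) (heq2 t ht)
end
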